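/- Let T be a finite tree and Aut(T) its automorphism group. Then the number of Aut(T)-orbits of vertices of T plus the number of Aut(T)-orbits of edges of T equals 1 plus the number of Aut(T)-orbits of arcs of T, where an arc is an ordered pair (u, v) of vertices such that {u, v} is an edge. -/

import Mathlib

/-!
Send an arc `u → v` of a tree with `n` vertices to its head `v` when the branch at `v` (the
vertices nearer to `v` than to `u`) has at most `n / 2` vertices, and to its edge otherwise.
This map is `Aut(T)`-equivariant and injective: a vertex has at most one neighbour whose branch
is that light, and the two arcs of an edge cannot both have heavy heads. As `n + #E = 2 #E + 1`,
it misses exactly one vertex or edge (the centroid), which is then fixed by `Aut(T)`. Hence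
`V ⊕ E` is equivariantly `{centroid} ⊕ arcs`, and counting orbits gives the identity.
-/

open Finset

namespace MulAction

/-- The orbit space, with the relation written `g • a = b` as in the theorem below
(`MulAction.orbitRel` relates `a` and `b` by `a ∈ orbit G b`). -/
abbrev OrbitQuot (G α : Type*) [SMul G α] := Quot fun a b : α => ∃ g : G, g • a = b

variable {G α β : Type*}

def OrbitQuot.congr [SMul G α] [SMul G β] (e : α ≃ β)
    (he : ∀ (g : G) a, e (g • a) = g • e a) : OrbitQuot G α ≃ OrbitQuot G β :=
  Quot.congr e fun a b =>
    ⟨fun ⟨g, h⟩ => ⟨g, by rw [← he, h]⟩,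
      fun ⟨g, h⟩ => ⟨g, e.injective (by rw [he, h])⟩⟩

def OrbitQuot.sumEquiv [SMul G α] [SMul G β] :
    OrbitQuot G (α ⊕ β) ≃ OrbitQuot G α ⊕ OrbitQuot G β where
  toFun := Quot.lift (Sum.map (Quot.mk _) (Quot.mk _)) <| by
    rintro (a | a) (b | b) ⟨g, h⟩ <;> simp only [Sum.smul_inl, Sum.smul_inr] at h <;> cases h
    exacts [congrArg Sum.inl (Quot.sound ⟨g, rfl⟩), congrArg Sum.inr (Quot.sound ⟨g, rfl⟩)]
  invFun := Sum.elim
    (Quot.lift (Quot.mk _ ∘ Sum.inl) fun _ _ ⟨g, h⟩ => Quot.sound ⟨g, by simp [h]⟩)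
    (Quot.lift (Quot.mk _ ∘ Sum.inr) fun _ _ ⟨g, h⟩ => Quot.sound ⟨g, by simp [h]⟩)
  left_inv := Quot.ind <| by rintro (a | b) <;> rfl
  right_inv := by rintro (q | q) <;> induction q using Quot.ind <;> rfl

theorem card_orbitQuot_sum [SMul G α] [SMul G β] [Finite α] [Finite β] :
    Nat.card (OrbitQuot G (α ⊕ β)) = Nat.card (OrbitQuot G α) + Nat.card (OrbitQuot G β) := by
  rw [Nat.card_congr OrbitQuot.sumEquiv, Nat.card_sum]

theorem card_orbitQuot_punit [SMul G PUnit] : Nat.card (OrbitQuot G PUnit) = 1 := by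
  have : Subsingleton (OrbitQuot G PUnit) := ⟨Quot.ind fun _ => Quot.ind fun _ => rfl⟩
  exact Nat.card_unique

theorem smul_eq_self_of_compl_range_eq [Group G] [MulAction G α] [MulAction G β] {f : α → β}
    (hf : ∀ (g : G) a, f (g • a) = g • f a) {c : β} (hc : (Set.range f)ᶜ = {c}) (g : G) :
    g • c = c := by
  rw [← Set.mem_singleton_iff, ← hc]
  rintro ⟨a, ha⟩
  exact (hc ▸ rfl : c ∈ (Set.range f)ᶜ) ⟨g⁻¹ • a, by rw [hf, ha, inv_smul_smul]⟩

theorem card_orbitQuot_eq_one_add_of_injective [Group G] [MulAction G α] [MulAction G β]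
    [Finite β] {f : α → β} (hf_inj : f.Injective) (hf : ∀ (g : G) a, f (g • a) = g • f a)
    (hcard : Nat.card β = Nat.card α + 1) :
    Nat.card (OrbitQuot G β) = 1 + Nat.card (OrbitQuot G α) := by
  obtain ⟨c, hc⟩ : ∃ c, (Set.range f)ᶜ = {c} := by
    have := Set.ncard_add_ncard_compl (Set.range f)
    rw [Set.ncard_range_of_injective hf_inj] at this
    exact Set.ncard_eq_one.mp (by omega)
  have hc' : c ∈ (Set.range f)ᶜ := hc ▸ rfl
  have hbij : (Sum.elim (fun _ => c) f : PUnit.{1} ⊕ α → β).Bijective := by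
    refine ⟨.sumElim (Function.injective_of_subsingleton _) hf_inj
      fun _ a h => hc' ⟨a, h.symm⟩, ?_⟩
    rw [← Set.range_eq_univ, Set.Sum.elim_range, Set.range_const, ← hc, Set.compl_union_self]
  have : Finite α := .of_injective f hf_inj
  let e := Equiv.ofBijective _ hbij
  rw [← Nat.card_congr (OrbitQuot.congr (G := G) e ?_), card_orbitQuot_sum, card_orbitQuot_punit]
  rintro g (_ | a)
  · exact (smul_eq_self_of_compl_range_eq hf hc g).symm
  · exact hf g a

end MulAction

namespace SimpleGraph

variable {V W : Type*} {G : SimpleGraph V} {G' : SimpleGraph W}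

theorem Iso.dist_apply_le (φ : G ≃g G') {u v : V} (h : G.Reachable u v) :
    G'.dist (φ u) (φ v) ≤ G.dist u v := by
  obtain ⟨p, hp⟩ := h.exists_walk_length_eq_dist
  simpa [hp] using SimpleGraph.dist_le (p.map φ.toHom)

theorem Iso.dist_apply (φ : G ≃g G') (u v : V) : G'.dist (φ u) (φ v) = G.dist u v := by
  by_cases h : G.Reachable u v
  · refine (φ.dist_apply_le h).antisymm ?_
    simpa using φ.symm.dist_apply_le ((Iso.reachable_iff (φ := φ)).mpr h)
  · rw [dist_eq_zero_of_not_reachable h,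
      dist_eq_zero_of_not_reachable (mt Iso.reachable_iff.mp h)]

instance : MulAction (G ≃g G) G.edgeSet where
  smul φ e := φ.mapEdgeSet e
  one_smul e := Subtype.ext (congrFun Sym2.map_id e.1)
  mul_smul φ ψ e := Subtype.ext (Sym2.map_map (g := φ) (f := ψ) e.1).symm

instance : MulAction (G ≃g G) G.Dart where
  smul φ d := ⟨(φ d.fst, φ d.snd), φ.map_adj_iff.mpr d.adj⟩
  one_smul _ := rfl
  mul_smul _ _ _ := rfl

@[simp] theorem Iso.smul_dart_fst (φ : G ≃g G) (d : G.Dart) : (φ • d).fst = φ d.fst := rfl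
@[simp] theorem Iso.smul_dart_snd (φ : G ≃g G) (d : G.Dart) : (φ • d).snd = φ d.snd := rfl

theorem IsTree.eq_penultimate_of_dist_lt (hG : G.IsTree) {u v w : V} {p : G.Walk w v}
    (hp : p.IsPath) (h : G.Adj u v) (hd : G.dist w u < G.dist w v) : u = p.penultimate := by
  classical
  obtain ⟨q, hq, hql⟩ := hG.connected.exists_path_of_dist w u
  have hv : v ∉ q.support := fun hv => by
    have := (dist_le (q.takeUntil v hv)).trans (q.length_takeUntil_le_length hv)
    omega
  rw [(hG.existsUnique_path w v).unique hp (hq.concat hv h), Walk.penultimate_concat]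

variable [Fintype V]

/-- For an edge `uv` of a tree, the component of `G - uv` containing `v`. -/
noncomputable def branch (G : SimpleGraph V) (u v : V) : Finset V :=
  {w | G.dist w v < G.dist w u}

theorem mem_branch {u v w : V} : w ∈ G.branch u v ↔ G.dist w v < G.dist w u := by
  simp [branch]

theorem card_branch_iso [Fintype W] (φ : G ≃g G') (u v : V) :
    #(G'.branch (φ u) (φ v)) = #(G.branch u v) :=
  (card_equiv φ.toEquiv fun w => by simp [mem_branch, Iso.dist_apply]).symm

theorem IsTree.card_branch_add_card_branch (hG : G.IsTree) {u v : V} (h : G.Adj u v) :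
    #(G.branch u v) + #(G.branch v u) = Fintype.card V := by
  have : G.branch v u = ({w | ¬ G.dist w v < G.dist w u} : Finset V) := by
    ext w
    have := hG.dist_eq_dist_add_one_of_adj w h
    simp only [mem_branch, mem_filter_univ]
    omega
  rw [this, branch, card_filter_add_card_filter_not, card_univ]

theorem IsTree.disjoint_branch (hG : G.IsTree) {u₁ u₂ v : V} (h₁ : G.Adj u₁ v)
    (h₂ : G.Adj u₂ v) (hne : u₁ ≠ u₂) : Disjoint (G.branch v u₁) (G.branch v u₂) := by
  refine Finset.disjoint_left.mpr fun w hw₁ hw₂ => hne ?_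
  obtain ⟨p, hp, -⟩ := hG.connected.exists_path_of_dist w v
  rw [hG.eq_penultimate_of_dist_lt hp h₁ (mem_branch.mp hw₁),
    hG.eq_penultimate_of_dist_lt hp h₂ (mem_branch.mp hw₂)]

theorem IsTree.eq_of_two_mul_card_branch_le (hG : G.IsTree) {u₁ u₂ v : V} (h₁ : G.Adj u₁ v)
    (h₂ : G.Adj u₂ v) (c₁ : 2 * #(G.branch u₁ v) ≤ Fintype.card V)
    (c₂ : 2 * #(G.branch u₂ v) ≤ Fintype.card V) : u₁ = u₂ := by
  classical
  by_contra hne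
  have hv : v ∉ G.branch v u₁ ∪ G.branch v u₂ := by simp [mem_branch]
  have hlt := card_lt_univ_of_notMem hv
  rw [card_union_of_disjoint (hG.disjoint_branch h₁ h₂ hne)] at hlt
  have hsum₁ := hG.card_branch_add_card_branch h₁
  have hsum₂ := hG.card_branch_add_card_branch h₂
  omega

noncomputable def headOrEdge (G : SimpleGraph V) (d : G.Dart) : V ⊕ G.edgeSet :=
  if 2 * #(G.branch d.fst d.snd) ≤ Fintype.card V then .inl d.snd
  else .inr ⟨d.edge, d.edge_mem⟩

theorem headOrEdge_smul (φ : G ≃g G) (d : G.Dart) :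
    G.headOrEdge (φ • d) = φ • G.headOrEdge d := by
  simp only [headOrEdge, Iso.smul_dart_fst, Iso.smul_dart_snd, card_branch_iso]
  split_ifs
  · rfl
  · exact congrArg Sum.inr (Subtype.ext (Sym2.map_mk φ _ _).symm)

theorem IsTree.headOrEdge_injective (hG : G.IsTree) : G.headOrEdge.Injective := by
  intro d₁ d₂ h
  unfold headOrEdge at h
  split_ifs at h with c₁ c₂ c₂
  · have hsnd : d₁.snd = d₂.snd := Sum.inl_injective h
    have hfst := hG.eq_of_two_mul_card_branch_le d₁.adj (hsnd ▸ d₂.adj) c₁ (hsnd ▸ c₂)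
    exact Dart.ext _ _ (Prod.ext hfst hsnd)
  · rcases (dart_edge_eq_iff d₁ d₂).mp (congrArg Subtype.val (Sum.inr_injective h)) with h | rfl
    · exact h
    · have hsum := hG.card_branch_add_card_branch d₂.adj
      simp only [Dart.symm_toProd, Prod.fst_swap, Prod.snd_swap] at c₁
      omega

theorem IsTree.card_sum_edgeSet (hG : G.IsTree) :
    Nat.card (V ⊕ G.edgeSet) = Nat.card G.Dart + 1 := by
  classical
  rw [Nat.card_sum]
  simp only [Nat.card_eq_fintype_card]
  rw [dart_card_eq_twice_card_edges, ← edgeFinset_card, ← hG.card_edgeFinset]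
  ring

end SimpleGraph

open MulAction SimpleGraph in
/-- The dissymmetry theorem for trees: for a finite tree `T`, the number of orbits of
vertices under `Aut(T)` plus the number of orbits of edges equals `1` plus the number of
orbits of arcs (ordered pairs `(u, v)` with `{u, v}` an edge). -/
theorem dissymmetry_theorem_for_trees {V : Type} [Fintype V]
    (T : SimpleGraph V) (hT : T.IsTree) :
    Nat.card (Quot (fun u v : V => ∃ φ : T ≃g T, φ u = v)) +
      Nat.card (Quot (fun (e e' : ↥T.edgeSet) =>
        ∃ φ : T ≃g T, Sym2.map (fun x => φ x) e.val = e'.val)) =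
    1 + Nat.card (Quot (fun (p q : {p : V × V // T.Adj p.1 p.2}) =>
        ∃ φ : T ≃g T, φ p.val.1 = q.val.1 ∧ φ p.val.2 = q.val.2)) := by
  have hE : Nat.card (Quot fun (e e' : ↥T.edgeSet) =>
      ∃ φ : T ≃g T, Sym2.map (fun x => φ x) e.val = e'.val) =
      Nat.card (OrbitQuot (T ≃g T) T.edgeSet) :=
    Nat.card_congr <| Quot.congrRight fun _ _ => exists_congr fun _ => by
      rw [Subtype.ext_iff]; rfl
  have hA : Nat.card (Quot fun (p q : {p : V × V // T.Adj p.1 p.2}) =>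
      ∃ φ : T ≃g T, φ p.val.1 = q.val.1 ∧ φ p.val.2 = q.val.2) =
      Nat.card (OrbitQuot (T ≃g T) T.Dart) :=
    Nat.card_congr <| Quot.congr
      ⟨fun p => ⟨p.1, p.2⟩, fun d => ⟨d.toProd, d.adj⟩, fun _ => rfl, fun _ => rfl⟩
      fun _ _ => exists_congr fun _ => by simp [Dart.ext_iff, Prod.ext_iff]
  rw [hE, hA, ← card_orbitQuot_eq_one_add_of_injective hT.headOrEdge_injective
    headOrEdge_smul hT.card_sum_edgeSet]
  exact card_orbitQuot_sum.symm
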